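/- Let (V, 𝕋) be a regular, well-posed, order stable ADP with finite policy set Σ. Then: (i) the fundamental ADP optimality results hold ((B1) V_Σ has a greatest element v*; (B2) v* is the unique fixed point of T in V; (B3) σ is optimal if and only if σ is v*-greedy); and (ii) HPI converges in finitely many steps: for every v ∈ V there exists n ∈ ℕ with Hⁿv = v*. -/

import Mathlib

/-!
A greedy step never lowers the value of a policy (upward stability), and a policy that is greedy
with respect to its own value dominates every other policy (downward stability). So the values
along Howard policy iteration increase, and since there are finitely many policies they must stall;
a stalled policy is greedy with respect to its own value, hence optimal. Conversely an optimal
policy is greedy with respect to its own value, and (B1)–(B3) follow from this characterisation.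
-/

theorem Finite.exists_map_iterate_succ_eq {α β : Type*} [Finite α] [PartialOrder β]
    (f : α → α) (w : α → β) (hw : ∀ a, w a ≤ w (f a)) (a : α) :
    ∃ m, w (f^[m + 1] a) = w (f^[m] a) := by
  by_contra! hne
  have hmono : StrictMono fun n => w (f^[n] a) := strictMono_nat_of_lt_succ fun n =>
    lt_of_le_of_ne (by rw [Function.iterate_succ_apply']; exact hw _) (hne n).symm
  exact not_injective_infinite_finite _ (Function.Injective.of_comp (f := w) hmono.injective)

section ADP

variable {V Pol : Type*} [PartialOrder V]

def IsGreedy (T : Pol → V → V) (v : V) (σ : Pol) : Prop := ∀ τ, T τ v ≤ T σ v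

def IsOptimal (vfix : Pol → V) (σ : Pol) : Prop := ∀ τ, vfix τ ≤ vfix σ

theorem IsOptimal.vfix_eq {vfix : Pol → V} {σ σ' : Pol} (hσ : IsOptimal vfix σ)
    (hσ' : IsOptimal vfix σ') : vfix σ = vfix σ' :=
  le_antisymm (hσ' σ) (hσ σ')

structure IsOrderStableADP (T : Pol → V → V) (vfix : Pol → V) : Prop where
  apply_vfix : ∀ σ, T σ (vfix σ) = vfix σ
  le_vfix : ∀ σ v, v ≤ T σ v → v ≤ vfix σ
  vfix_le : ∀ σ v, T σ v ≤ v → vfix σ ≤ v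

namespace IsOrderStableADP

variable {T : Pol → V → V} {vfix : Pol → V}

theorem eq_vfix_of_apply_eq (h : IsOrderStableADP T vfix) {σ : Pol} {v : V} (hv : T σ v = v) :
    v = vfix σ :=
  le_antisymm (h.le_vfix σ v hv.ge) (h.vfix_le σ v hv.le)

theorem vfix_le_vfix_of_isGreedy (h : IsOrderStableADP T vfix) {σ σ' : Pol}
    (hσ' : IsGreedy T (vfix σ) σ') : vfix σ ≤ vfix σ' :=
  h.le_vfix σ' _ ((h.apply_vfix σ).ge.trans (hσ' σ))

theorem isOptimal_of_isGreedy_vfix (h : IsOrderStableADP T vfix) {σ : Pol}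
    (hσ : IsGreedy T (vfix σ) σ) : IsOptimal vfix σ :=
  fun τ => h.vfix_le τ _ ((hσ τ).trans (h.apply_vfix σ).le)

theorem isGreedy_vfix_of_isOptimal (h : IsOrderStableADP T vfix) {sel : V → Pol}
    (hsel : ∀ v, IsGreedy T v (sel v)) {σ : Pol} (hσ : IsOptimal vfix σ) :
    IsGreedy T (vfix σ) σ := by
  set σ' := sel (vfix σ)
  have hval : vfix σ' = vfix σ := le_antisymm (hσ σ') (h.vfix_le_vfix_of_isGreedy (hsel _))
  intro τ
  calc T τ (vfix σ) ≤ T σ' (vfix σ) := hsel _ τ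
    _ = T σ' (vfix σ') := by rw [hval]
    _ = T σ (vfix σ) := by rw [h.apply_vfix, hval, h.apply_vfix]

theorem isOptimal_iff_isGreedy_of_isOptimal (h : IsOrderStableADP T vfix) {sel : V → Pol}
    (hsel : ∀ v, IsGreedy T v (sel v)) {σstar : Pol} (hstar : IsOptimal vfix σstar) (σ : Pol) :
    IsOptimal vfix σ ↔ IsGreedy T (vfix σstar) σ := by
  refine ⟨fun hσ => ?_, fun hσ => ?_⟩
  · rw [hstar.vfix_eq hσ]
    exact h.isGreedy_vfix_of_isOptimal hsel hσ
  · have hgreedy := h.isGreedy_vfix_of_isOptimal hsel hstar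
    have happly : T σ (vfix σstar) = vfix σstar :=
      le_antisymm ((hgreedy σ).trans (h.apply_vfix σstar).le)
        ((h.apply_vfix σstar).symm.trans_le (hσ σstar))
    exact fun τ => (hstar τ).trans (h.eq_vfix_of_apply_eq happly).le

theorem bellman_vfix_of_isOptimal (h : IsOrderStableADP T vfix) {sel : V → Pol}
    (hsel : ∀ v, IsGreedy T v (sel v)) {Bell : V → V}
    (hBell : ∀ v σ, IsGreedy T v σ → Bell v = T σ v) {σ : Pol} (hσ : IsOptimal vfix σ) :
    Bell (vfix σ) = vfix σ :=
  (hBell _ σ (h.isGreedy_vfix_of_isOptimal hsel hσ)).trans (h.apply_vfix σ)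

theorem eq_vfix_of_bellman_eq (h : IsOrderStableADP T vfix) {sel : V → Pol}
    (hsel : ∀ v, IsGreedy T v (sel v)) {Bell : V → V}
    (hBell : ∀ v σ, IsGreedy T v σ → Bell v = T σ v) {σstar : Pol}
    (hstar : IsOptimal vfix σstar) {v : V} (hv : Bell v = v) : v = vfix σstar := by
  have hfix : v = vfix (sel v) := h.eq_vfix_of_apply_eq ((hBell v _ (hsel v)).symm.trans hv)
  have hgreedy : IsGreedy T (vfix (sel v)) (sel v) := hfix ▸ hsel v
  exact hfix.trans ((h.isOptimal_of_isGreedy_vfix hgreedy).vfix_eq hstar)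

theorem exists_isOptimal_iterate [Finite Pol] (h : IsOrderStableADP T vfix) {sel : V → Pol}
    (hsel : ∀ v, IsGreedy T v (sel v)) (σ : Pol) :
    ∃ m, IsOptimal vfix ((fun σ => sel (vfix σ))^[m] σ) := by
  obtain ⟨m, hm⟩ := Finite.exists_map_iterate_succ_eq (fun σ => sel (vfix σ)) vfix
    (fun _ => h.vfix_le_vfix_of_isGreedy (hsel _)) σ
  refine ⟨m + 1, h.isOptimal_of_isGreedy_vfix ?_⟩
  rw [hm, Function.iterate_succ_apply']
  exact hsel _

/-- `vfix` semiconjugates the policy iteration `σ ↦ sel (vfix σ)` to Howard's operator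
`w ↦ vfix (sel w)`, and after one step the latter only visits values of policies. -/
theorem exists_iterate_howard_eq [Finite Pol] (h : IsOrderStableADP T vfix) {sel : V → Pol}
    (hsel : ∀ v, IsGreedy T v (sel v)) {σstar : Pol} (hstar : IsOptimal vfix σstar) (v : V) :
    ∃ n, (fun w => vfix (sel w))^[n] v = vfix σstar := by
  have hsemiconj : Function.Semiconj vfix (fun σ => sel (vfix σ)) (fun w => vfix (sel w)) :=
    fun _ => rfl
  obtain ⟨m, hm⟩ := h.exists_isOptimal_iterate hsel (sel v)
  refine ⟨m + 1, ?_⟩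
  rw [Function.iterate_succ_apply, ← (hsemiconj.iterate_right m).eq]
  exact hm.vfix_eq hstar

end IsOrderStableADP

end ADP

theorem stmt11_general {V Pol : Type*} [PartialOrder V] [Nonempty Pol] [Finite Pol]
    (T : Pol → V → V)
    -- the Bellman operator:
    (Bell : V → V)
    (hBell : ∀ (v : V) (σ : Pol), (∀ τ : Pol, T τ v ≤ T σ v) → Bell v = T σ v)
    -- well-posedness:
    (vfix : Pol → V) (hfix : ∀ σ : Pol, T σ (vfix σ) = vfix σ)
    -- order stability of every policy operator:
    (hup : ∀ (σ : Pol) (v : V), v ≤ T σ v → v ≤ vfix σ)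
    (hdown : ∀ (σ : Pol) (v : V), T σ v ≤ v → vfix σ ≤ v)
    -- a fixed greedy selection, defining `H v = vfix (sel v)`:
    (sel : V → Pol) (hsel : ∀ v : V, ∀ τ : Pol, T τ v ≤ T (sel v) v) :
    ∃ σstar : Pol,
      -- (B1):
      (∀ τ : Pol, vfix τ ≤ vfix σstar) ∧
      -- (B2):
      Bell (vfix σstar) = vfix σstar ∧
      (∀ v : V, Bell v = v → v = vfix σstar) ∧
      -- (B3):
      (∀ σ : Pol, (∀ τ : Pol, vfix τ ≤ vfix σ) ↔
        (∀ τ : Pol, T τ (vfix σstar) ≤ T σ (vfix σstar))) ∧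
      -- (ii) HPI converges in finitely many steps:
      (∀ v : V, ∃ n : ℕ, (fun w => vfix (sel w))^[n] v = vfix σstar) := by
  have hADP : IsOrderStableADP T vfix := ⟨hfix, hup, hdown⟩
  obtain ⟨m, hstar⟩ := hADP.exists_isOptimal_iterate hsel (Classical.arbitrary Pol)
  exact ⟨_, hstar, hADP.bellman_vfix_of_isOptimal hsel hBell hstar,
    fun _ => hADP.eq_vfix_of_bellman_eq hsel hBell hstar,
    hADP.isOptimal_iff_isGreedy_of_isOptimal hsel hstar,
    hADP.exists_iterate_howard_eq hsel hstar⟩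

/-- Theorem t:bkf: Let `(V, 𝕋)` be a regular well-posed order
stable ADP with finite policy set.  Then (i) the fundamental ADP optimality
results hold, and (ii) HPI converges in finitely many steps: for every
`v ∈ V` there is `n` with `Hⁿ v = v*`. -/
theorem stmt11 {V Pol : Type*} [PartialOrder V] [Nonempty Pol] [Finite Pol]
    (T : Pol → V → V) (hmono : ∀ σ : Pol, Monotone (T σ))
    -- regularity:
    (hreg : ∀ v : V, ∃ σ : Pol, ∀ τ : Pol, T τ v ≤ T σ v)
    -- the Bellman operator:
    (Bell : V → V)
    (hBell : ∀ (v : V) (σ : Pol), (∀ τ : Pol, T τ v ≤ T σ v) → Bell v = T σ v)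
    -- well-posedness:
    (vfix : Pol → V) (hfix : ∀ σ : Pol, T σ (vfix σ) = vfix σ)
    (huniq : ∀ (σ : Pol) (v : V), T σ v = v → v = vfix σ)
    -- order stability of every policy operator:
    (hup : ∀ (σ : Pol) (v : V), v ≤ T σ v → v ≤ vfix σ)
    (hdown : ∀ (σ : Pol) (v : V), T σ v ≤ v → vfix σ ≤ v)
    -- a fixed greedy selection, defining `H v = vfix (sel v)`:
    (sel : V → Pol) (hsel : ∀ v : V, ∀ τ : Pol, T τ v ≤ T (sel v) v) :
    ∃ σstar : Pol,
      -- (B1):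
      (∀ τ : Pol, vfix τ ≤ vfix σstar) ∧
      -- (B2):
      Bell (vfix σstar) = vfix σstar ∧
      (∀ v : V, Bell v = v → v = vfix σstar) ∧
      -- (B3):
      (∀ σ : Pol, (∀ τ : Pol, vfix τ ≤ vfix σ) ↔
        (∀ τ : Pol, T τ (vfix σstar) ≤ T σ (vfix σstar))) ∧
      -- (ii) HPI converges in finitely many steps:
      (∀ v : V, ∃ n : ℕ, (fun w => vfix (sel w))^[n] v = vfix σstar) :=
  stmt11_general T Bell hBell vfix hfix hup hdown sel hsel
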